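/- arXiv:1909.04483 — 3 statements merged into one kernel-verified Lean document; each statement's English description precedes it below -/
import Mathlib

section
/- Let X be a complete length space, let I ⊆ ℝ be a closed nondegenerate interval, and let f : I → ℝ be measurable with 0 < f_min ≤ f(t) ≤ f_max < ∞ for all t ∈ I. Then the null distance d̂_f of the warped product I ×_f X is a metric on I × X and the metric space (I × X, d̂_f) is complete. (Instance, for warped product spacetimes, of the theorem that a time function which is anti-Lipschitz with respect to a complete Riemannian metric yields a complete null distance.) -/
open MeasureTheory

/-- Causal relation of the warped product `I ×_f X`: `(s,x) ≼_f (t,y)` iff `s ≤ t` and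
`d(x,y) ≤ ∫_s^t f(u)⁻¹ du`. -/
def WPCausal {X : Type*} [MetricSpace X] (f : ℝ → ℝ) (p q : ℝ × X) : Prop :=
  p.1 ≤ q.1 ∧
    ENNReal.ofReal (dist p.2 q.2) ≤ ∫⁻ u in Set.Ioc p.1 q.1, ENNReal.ofReal ((f u)⁻¹)

/-- `σ` is a piecewise causal chain with `n+1` segments from `p` to `q` inside `I × X`. -/
def WPChain {X : Type*} [MetricSpace X] (I : Set ℝ) (f : ℝ → ℝ) (p q : ℝ × X) (n : ℕ)
    (σ : ℕ → ℝ × X) : Prop :=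
  σ 0 = p ∧ σ (n + 1) = q ∧ (∀ i ≤ n + 1, (σ i).1 ∈ I) ∧
    ∀ i ≤ n, WPCausal f (σ i) (σ (i + 1)) ∨ WPCausal f (σ (i + 1)) (σ i)

/-- The null distance of the warped product `I ×_f X`. -/
noncomputable def nullDist {X : Type*} [MetricSpace X] (I : Set ℝ) (f : ℝ → ℝ)
    (p q : ℝ × X) : ℝ :=
  sInf { r | ∃ n σ, WPChain I f p q n σ ∧
    r = ∑ i ∈ Finset.range (n + 1), |(σ (i + 1)).1 - (σ i).1| }

/-! The null distance is squeezed between two multiples of the product metric on `I × X`.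
A causal step with time increment `Δt` moves at most `Δt / fmin` in `X`, so every chain from
`p` to `q` has null length at least `|Δt|` and at least `fmin · d(x, y)`. Conversely, bisecting
`d(x, y)` by approximate midpoints and zigzagging between two times `t` and `t ± δ` produces
chains of null length as close to `fmax · d(x, y)` as we like, so `d̂_f ≤ |Δt| + fmax · d`.
Hence `d̂_f` is a metric uniformly equivalent to the product metric, and completeness of
`I × X` transfers to it. -/

def IsLengthSpace (X : Type*) [MetricSpace X] : Prop :=
  ∀ x y : X, ∀ ε : ℝ, 0 < ε → ∃ z : X, max (dist x z) (dist z y) ≤ dist x y / 2 + ε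

def WPStep {X : Type*} [MetricSpace X] (I : Set ℝ) (f : ℝ → ℝ) (p q : ℝ × X) : Prop :=
  p.1 ∈ I ∧ q.1 ∈ I ∧ (WPCausal f p q ∨ WPCausal f q p)

inductive WPChainLength {X : Type*} [MetricSpace X] (I : Set ℝ) (f : ℝ → ℝ) :
    ℝ × X → ℝ × X → ℝ → Prop
  | single {p q : ℝ × X} : WPStep I f p q → WPChainLength I f p q |q.1 - p.1|
  | cons {p q r : ℝ × X} {c : ℝ} :
      WPStep I f p q → WPChainLength I f q r c → WPChainLength I f p r (|q.1 - p.1| + c)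

lemma IsLengthSpace.exists_dist_lt_of_dist_lt_two_mul {X : Type*} [MetricSpace X]
    (hX : IsLengthSpace X) {x y : X} {r : ℝ} (h : dist x y < 2 * r) :
    ∃ z, dist x z < r ∧ dist z y < r := by
  obtain ⟨z, hz⟩ := hX x y ((r - dist x y / 2) / 2) (by linarith)
  exact ⟨z, by linarith [le_max_left (dist x z) (dist z y)],
    by linarith [le_max_right (dist x z) (dist z y)]⟩

lemma Set.OrdConnected.exists_abs_sub_eq {I : Set ℝ} (hIc : I.OrdConnected) {a b t δ : ℝ}
    (ha : a ∈ I) (hb : b ∈ I) (ht : t ∈ I) (hδ : 0 ≤ δ) (h2δ : 2 * δ ≤ b - a) :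
    ∃ s ∈ I, |s - t| = δ := by
  by_cases h : t + δ ≤ b
  · exact ⟨t + δ, hIc.out ht hb ⟨by linarith, h⟩, by simp [abs_of_nonneg hδ]⟩
  · exact ⟨t - δ, hIc.out ha ht ⟨by linarith, by linarith⟩, by simp [abs_of_nonneg hδ]⟩

lemma exists_forall_lt_of_mul_dist_le {Y : Type*} [MetricSpace Y] [CompleteSpace Y]
    {S : Set Y} (hS : IsClosed S) {D : Y → Y → ℝ} {c C : ℝ} (hc : 0 < c)
    (hD : ∀ p ∈ S, ∀ q ∈ S, c * dist p q ≤ D p q ∧ D p q ≤ C * dist p q)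
    (u : ℕ → Y) (hu : ∀ n, u n ∈ S)
    (hcauchy : ∀ ε : ℝ, 0 < ε → ∃ N, ∀ m ≥ N, ∀ n ≥ N, D (u m) (u n) < ε) :
    ∃ p ∈ S, ∀ ε : ℝ, 0 < ε → ∃ N, ∀ n ≥ N, D (u n) p < ε := by
  have hu_cauchy : CauchySeq u := Metric.cauchySeq_iff.2 fun ε hε => by
    obtain ⟨N, hN⟩ := hcauchy (c * ε) (by positivity)
    exact ⟨N, fun m hm n hn =>
      lt_of_mul_lt_mul_left ((hD _ (hu m) _ (hu n)).1.trans_lt (hN m hm n hn)) hc.le⟩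
  obtain ⟨p, hp⟩ := cauchySeq_tendsto_of_complete hu_cauchy
  have hpS : p ∈ S := hS.mem_of_tendsto hp (Filter.Eventually.of_forall hu)
  have hlim : Filter.Tendsto (fun n => C * dist (u n) p) Filter.atTop (nhds 0) := by
    simpa using (tendsto_iff_dist_tendsto_zero.1 hp).const_mul C
  refine ⟨p, hpS, fun ε hε => ?_⟩
  obtain ⟨N, hN⟩ := Filter.eventually_atTop.1 (hlim.eventually (gt_mem_nhds hε))
  exact ⟨N, fun n hn => ((hD _ (hu n) _ hpS).2).trans_lt (hN n hn)⟩

section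

variable {X : Type*} [MetricSpace X] {I : Set ℝ} {f : ℝ → ℝ}

lemma WPCausal.mul_dist_le {c : ℝ} (hc : 0 < c) {p q : ℝ × X}
    (hf : ∀ u ∈ Set.Ioc p.1 q.1, c ≤ f u) (h : WPCausal f p q) :
    c * dist p.2 q.2 ≤ q.1 - p.1 := by
  have hint : ∫⁻ u in Set.Ioc p.1 q.1, ENNReal.ofReal (f u)⁻¹
      ≤ ∫⁻ _ in Set.Ioc p.1 q.1, ENNReal.ofReal c⁻¹ :=
    setLIntegral_mono' measurableSet_Ioc fun u hu =>
      ENNReal.ofReal_le_ofReal (inv_anti₀ hc (hf u hu))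
  rw [setLIntegral_const, Real.volume_Ioc, ← ENNReal.ofReal_mul (by positivity)] at hint
  have := (ENNReal.ofReal_le_ofReal_iff (by have := h.1; positivity)).1 (h.2.trans hint)
  rwa [inv_mul_eq_div, le_div_iff₀' hc] at this

lemma wpCausal_of_mul_dist_le {C : ℝ} (hC : 0 < C) {p q : ℝ × X}
    (hf : ∀ u ∈ Set.Ioc p.1 q.1, 0 < f u ∧ f u ≤ C) (hpq : p.1 ≤ q.1)
    (h : C * dist p.2 q.2 ≤ q.1 - p.1) : WPCausal f p q := by
  refine ⟨hpq, le_trans ?_ (setLIntegral_mono' measurableSet_Ioc fun u hu =>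
    ENNReal.ofReal_le_ofReal (inv_anti₀ (hf u hu).1 (hf u hu).2))⟩
  rw [setLIntegral_const, Real.volume_Ioc, ← ENNReal.ofReal_mul (by positivity)]
  refine ENNReal.ofReal_le_ofReal ?_
  rw [inv_mul_eq_div, le_div_iff₀' hC]
  exact h

lemma WPStep.symm {p q : ℝ × X} (h : WPStep I f p q) : WPStep I f q p :=
  ⟨h.2.1, h.1, h.2.2.symm⟩

lemma wpStep_self {p : ℝ × X} (hp : p.1 ∈ I) : WPStep I f p p :=
  ⟨hp, hp, Or.inl ⟨le_rfl, by simp⟩⟩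

lemma WPStep.mul_dist_le (hIc : I.OrdConnected) {c : ℝ} (hc : 0 < c)
    (hf : ∀ t ∈ I, c ≤ f t) {p q : ℝ × X} (h : WPStep I f p q) :
    c * dist p.2 q.2 ≤ |q.1 - p.1| := by
  obtain ⟨hp, hq, hpq | hqp⟩ := h
  · rw [abs_of_nonneg (sub_nonneg.2 hpq.1)]
    exact hpq.mul_dist_le hc fun u hu => hf u (hIc.out hp hq (Set.Ioc_subset_Icc_self hu))
  · rw [abs_sub_comm, abs_of_nonneg (sub_nonneg.2 hqp.1), dist_comm]
    exact hqp.mul_dist_le hc fun u hu => hf u (hIc.out hq hp (Set.Ioc_subset_Icc_self hu))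

lemma wpStep_of_mul_dist_le (hIc : I.OrdConnected) {C : ℝ} (hC : 0 < C)
    (hf : ∀ t ∈ I, 0 < f t ∧ f t ≤ C) {p q : ℝ × X} (hp : p.1 ∈ I) (hq : q.1 ∈ I)
    (h : C * dist p.2 q.2 ≤ |q.1 - p.1|) : WPStep I f p q := by
  refine ⟨hp, hq, ?_⟩
  rcases le_total p.1 q.1 with hpq | hqp
  · rw [abs_of_nonneg (sub_nonneg.2 hpq)] at h
    exact .inl <| wpCausal_of_mul_dist_le hC
      (fun u hu => hf u (hIc.out hp hq (Set.Ioc_subset_Icc_self hu))) hpq h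
  · rw [abs_sub_comm, abs_of_nonneg (sub_nonneg.2 hqp), dist_comm] at h
    exact .inr <| wpCausal_of_mul_dist_le hC
      (fun u hu => hf u (hIc.out hq hp (Set.Ioc_subset_Icc_self hu))) hqp h

namespace WPChainLength

lemma nonneg {p q : ℝ × X} {c : ℝ} (h : WPChainLength I f p q c) : 0 ≤ c := by
  induction h with
  | single => positivity
  | cons _ _ ih => positivity

lemma trans {p q r : ℝ × X} {c d : ℝ} (hpq : WPChainLength I f p q c)
    (hqr : WPChainLength I f q r d) : WPChainLength I f p r (c + d) := by
  induction hpq with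
  | single h => exact cons h hqr
  | cons h _ ih => rw [add_assoc]; exact cons h (ih hqr)

lemma symm {p q : ℝ × X} {c : ℝ} (h : WPChainLength I f p q c) : WPChainLength I f q p c := by
  induction h with
  | single h => rw [abs_sub_comm]; exact single h.symm
  | @cons p q _ c h _ ih => rw [add_comm, abs_sub_comm]; exact ih.trans (single h.symm)

lemma le_of_forall_step {L : ℝ × X → ℝ × X → ℝ} (hL : ∀ a b c, L a c ≤ L a b + L b c)
    (hstep : ∀ a b, WPStep I f a b → L a b ≤ |b.1 - a.1|) {p q : ℝ × X} {c : ℝ}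
    (h : WPChainLength I f p q c) : L p q ≤ c := by
  induction h with
  | single h => exact hstep _ _ h
  | @cons p q r _ h _ ih => exact (hL p q r).trans (add_le_add (hstep p q h) ih)

end WPChainLength

lemma wpChainLength_of_wpChain {p q : ℝ × X} {n : ℕ} {σ : ℕ → ℝ × X}
    (h : WPChain I f p q n σ) :
    WPChainLength I f p q (∑ i ∈ Finset.range (n + 1), |(σ (i + 1)).1 - (σ i).1|) := by
  induction n generalizing p σ with
  | zero =>
    obtain ⟨rfl, rfl, hmem, hstep⟩ := h
    simpa using WPChainLength.single ⟨hmem 0 (by omega), hmem 1 le_rfl, hstep 0 le_rfl⟩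
  | succ n ih =>
    obtain ⟨rfl, rfl, hmem, hstep⟩ := h
    have htail : WPChain I f (σ 1) (σ (n + 2)) n (fun i => σ (i + 1)) :=
      ⟨rfl, rfl, fun i hi => hmem (i + 1) (by omega), fun i hi => hstep (i + 1) (by omega)⟩
    rw [Finset.sum_range_succ', add_comm (Finset.sum _ _)]
    exact .cons ⟨hmem 0 (by omega), hmem 1 (by omega), hstep 0 (by omega)⟩ (ih htail)

lemma WPChainLength.exists_wpChain {p q : ℝ × X} {c : ℝ} (h : WPChainLength I f p q c) :
    ∃ n σ, WPChain I f p q n σ ∧ c = ∑ i ∈ Finset.range (n + 1), |(σ (i + 1)).1 - (σ i).1| := by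
  induction h with
  | @single p q h =>
    refine ⟨0, fun i => if i = 0 then p else q, ⟨rfl, rfl, fun i hi => ?_, fun i hi => ?_⟩, ?_⟩
    · rcases Nat.le_one_iff_eq_zero_or_eq_one.1 hi with rfl | rfl
      exacts [h.1, h.2.1]
    · obtain rfl := Nat.le_zero.1 hi
      exact h.2.2
    · simp
  | @cons p q r c h _ ih =>
    obtain ⟨n, σ, ⟨rfl, rfl, hmem, hstep⟩, rfl⟩ := ih
    refine ⟨n + 1, fun | 0 => p | i + 1 => σ i, ⟨rfl, rfl, fun i hi => ?_, fun i hi => ?_⟩, ?_⟩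
    · cases i with
      | zero => exact h.1
      | succ i => exact hmem i (by omega)
    · cases i with
      | zero => exact h.2.2
      | succ i => exact hstep i (by omega)
    · rw [Finset.sum_range_succ' _ (n + 1), add_comm (Finset.sum _ _)]

lemma nullDist_eq_sInf (p q : ℝ × X) :
    nullDist I f p q = sInf {c | WPChainLength I f p q c} := by
  refine congrArg sInf (Set.ext fun c => ?_)
  exact ⟨fun ⟨_, _, h, hc⟩ => hc ▸ wpChainLength_of_wpChain h, WPChainLength.exists_wpChain⟩

lemma bddBelow_wpChainLength (p q : ℝ × X) : BddBelow {c | WPChainLength I f p q c} :=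
  ⟨0, fun _ hc => hc.nonneg⟩

lemma nullDist_nonneg (p q : ℝ × X) : 0 ≤ nullDist I f p q := by
  rw [nullDist_eq_sInf]
  exact Real.sInf_nonneg fun _ hc => hc.nonneg

lemma WPChainLength.nullDist_le {p q : ℝ × X} {c : ℝ} (h : WPChainLength I f p q c) :
    nullDist I f p q ≤ c := by
  rw [nullDist_eq_sInf]
  exact csInf_le (bddBelow_wpChainLength p q) h

lemma nullDist_self {p : ℝ × X} (hp : p.1 ∈ I) : nullDist I f p p = 0 :=
  le_antisymm (by simpa using (WPChainLength.single (wpStep_self (f := f) hp)).nullDist_le)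
    (nullDist_nonneg p p)

lemma nullDist_comm (p q : ℝ × X) : nullDist I f p q = nullDist I f q p := by
  simp only [nullDist_eq_sInf]
  exact congrArg sInf (Set.ext fun _ => ⟨WPChainLength.symm, WPChainLength.symm⟩)

lemma nullDist_triangle {p q r : ℝ × X} (hpq : ∃ c, WPChainLength I f p q c)
    (hqr : ∃ c, WPChainLength I f q r c) :
    nullDist I f p r ≤ nullDist I f p q + nullDist I f q r := by
  simp only [nullDist_eq_sInf]
  rw [← csInf_add (s := {c | WPChainLength I f p q c}) (t := {c | WPChainLength I f q r c}) hpq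
    (bddBelow_wpChainLength p q) hqr (bddBelow_wpChainLength q r)]
  exact csInf_le_csInf (bddBelow_wpChainLength p r) (Set.Nonempty.add hpq hqr)
    (Set.add_subset_iff.2 fun _ hc _ hd => WPChainLength.trans hc hd)

lemma le_nullDist_of_forall_step {L : ℝ × X → ℝ × X → ℝ}
    (hL : ∀ a b c, L a c ≤ L a b + L b c) (hstep : ∀ a b, WPStep I f a b → L a b ≤ |b.1 - a.1|)
    {p q : ℝ × X} (hpq : ∃ c, WPChainLength I f p q c) : L p q ≤ nullDist I f p q := by
  rw [nullDist_eq_sInf]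
  exact le_csInf hpq fun _ hc => hc.le_of_forall_step hL hstep

lemma min_mul_dist_le_nullDist (hIc : I.OrdConnected) {c : ℝ} (hc : 0 < c)
    (hf : ∀ t ∈ I, c ≤ f t) {p q : ℝ × X} (hpq : ∃ c, WPChainLength I f p q c) :
    min 1 c * dist p q ≤ nullDist I f p q := by
  have htime : |q.1 - p.1| ≤ nullDist I f p q :=
    le_nullDist_of_forall_step (L := fun a b => |b.1 - a.1|)
      (fun a b c => by simpa only [add_comm] using abs_sub_le c.1 b.1 a.1)
      (fun _ _ _ => le_rfl) hpq
  have hspace : c * dist p.2 q.2 ≤ nullDist I f p q :=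
    le_nullDist_of_forall_step (L := fun a b => c * dist a.2 b.2)
      (fun a b c' => by rw [← mul_add]; exact mul_le_mul_of_nonneg_left (dist_triangle _ _ _) hc.le)
      (fun _ _ h => h.mul_dist_le hIc hc hf) hpq
  rw [Prod.dist_eq, Real.dist_eq, abs_sub_comm, mul_max_of_nonneg _ _ (by positivity)]
  exact max_le ((mul_le_of_le_one_left (abs_nonneg _) (min_le_left _ _)).trans htime)
    ((mul_le_mul_of_nonneg_right (min_le_right _ _) dist_nonneg).trans hspace)

lemma wpChainLength_two_pow_mul
    (hX : IsLengthSpace X) (hIc : I.OrdConnected) {C : ℝ} (hC : 0 < C)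
    (hf : ∀ t ∈ I, 0 < f t ∧ f t ≤ C)
    {s t : ℝ} (hs : s ∈ I) (ht : t ∈ I) (k : ℕ) {x y : X}
    (h : C * dist x y < 2 ^ k * (2 * |s - t|)) :
    WPChainLength I f (t, x) (t, y) (2 ^ k * (2 * |s - t|)) := by
  induction k generalizing x y with
  | zero =>
    obtain ⟨z, hxz, hzy⟩ := hX.exists_dist_lt_of_dist_lt_two_mul (r := |s - t| / C)
      (by rw [mul_div_assoc', lt_div_iff₀' hC]; simpa using h)
    rw [lt_div_iff₀' hC] at hxz hzy
    have hup : WPStep I f (t, x) (s, z) := wpStep_of_mul_dist_le hIc hC hf ht hs hxz.le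
    have hdown : WPStep I f (s, z) (t, y) :=
      wpStep_of_mul_dist_le hIc hC hf hs ht (by rw [abs_sub_comm]; exact hzy.le)
    convert WPChainLength.cons hup (.single hdown) using 1
    simp only [abs_sub_comm t s]
    ring
  | succ k ih =>
    obtain ⟨z, hxz, hzy⟩ := hX.exists_dist_lt_of_dist_lt_two_mul (x := x) (y := y)
      (r := 2 ^ k * (2 * |s - t|) / C)
      (by rw [mul_div_assoc', lt_div_iff₀' hC]; exact h.trans_eq (by ring))
    rw [lt_div_iff₀' hC] at hxz hzy
    convert (ih hxz).trans (ih hzy) using 1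
    ring

lemma exists_wpChainLength_le
    (hX : IsLengthSpace X) (hIc : I.OrdConnected) {a b : ℝ} (ha : a ∈ I) (hb : b ∈ I) (hab : a < b)
    {C : ℝ} (hC : 0 < C) (hf : ∀ t ∈ I, 0 < f t ∧ f t ≤ C)
    {p q : ℝ × X} (hp : p.1 ∈ I) (hq : q.1 ∈ I) {ε : ℝ} (hε : 0 < ε) :
    ∃ c, WPChainLength I f p q c ∧ c ≤ |q.1 - p.1| + C * dist p.2 q.2 + ε := by
  set L := C * dist p.2 q.2 + ε
  -- `2 ^ k` zigzags of cost `2 δ` make up exactly `L`; `k` is large enough for `δ` to fit in `I`.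
  obtain ⟨k, hk⟩ := pow_unbounded_of_one_lt (L / (b - a)) one_lt_two
  have hL : 0 < L := by positivity
  obtain ⟨s, hs, hst⟩ := hIc.exists_abs_sub_eq ha hb hp (δ := L / (2 * 2 ^ k)) (by positivity)
    (by rw [div_lt_iff₀ (by linarith)] at hk; field_simp; linarith)
  have hspace : WPChainLength I f (p.1, p.2) (p.1, q.2) L := by
    convert wpChainLength_two_pow_mul hX hIc hC hf hs hp k (x := p.2) (y := q.2) ?_ using 1 <;>
      rw [hst] <;> field_simp
    linarith
  have htime : WPChainLength I f (p.1, q.2) q |q.1 - p.1| :=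
    .single (wpStep_of_mul_dist_le hIc hC hf hp hq (by simp))
  exact ⟨_, hspace.trans htime, by simp only [L]; linarith⟩

lemma nullDist_le_mul_dist
    (hX : IsLengthSpace X) (hIc : I.OrdConnected) {a b : ℝ} (ha : a ∈ I) (hb : b ∈ I) (hab : a < b)
    {C : ℝ} (hC : 0 < C) (hf : ∀ t ∈ I, 0 < f t ∧ f t ≤ C)
    {p q : ℝ × X} (hp : p.1 ∈ I) (hq : q.1 ∈ I) :
    nullDist I f p q ≤ (1 + C) * dist p q := by
  refine le_of_forall_pos_le_add fun ε hε => ?_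
  obtain ⟨c, hc, hcle⟩ := exists_wpChainLength_le hX hIc ha hb hab hC hf hp hq hε
  have h1 : |q.1 - p.1| ≤ dist p q := by
    rw [Prod.dist_eq, Real.dist_eq, abs_sub_comm]; exact le_max_left _ _
  have h2 : C * dist p.2 q.2 ≤ C * dist p q := by
    rw [Prod.dist_eq]; gcongr; exact le_max_right _ _
  linarith [hc.nullDist_le]

end

theorem stmt2_general {X : Type*} [MetricSpace X] [CompleteSpace X]
    (hX : ∀ x y : X, ∀ ε : ℝ, 0 < ε →
      ∃ z : X, max (dist x z) (dist z y) ≤ dist x y / 2 + ε)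
    (I : Set ℝ) (hIclosed : IsClosed I) (hIc : I.OrdConnected)
    (hInd : ∃ a ∈ I, ∃ b ∈ I, a < b)
    (f : ℝ → ℝ)
    (fmin fmax : ℝ) (hmin : 0 < fmin)
    (hbd : ∀ t ∈ I, fmin ≤ f t ∧ f t ≤ fmax) :
    (∀ p q : ℝ × X, p.1 ∈ I → q.1 ∈ I → 0 ≤ nullDist I f p q) ∧
    (∀ p q : ℝ × X, p.1 ∈ I → q.1 ∈ I → (nullDist I f p q = 0 ↔ p = q)) ∧
    (∀ p q : ℝ × X, p.1 ∈ I → q.1 ∈ I → nullDist I f p q = nullDist I f q p) ∧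
    (∀ p q r : ℝ × X, p.1 ∈ I → q.1 ∈ I → r.1 ∈ I →
      nullDist I f p r ≤ nullDist I f p q + nullDist I f q r) ∧
    (∀ u : ℕ → ℝ × X, (∀ n, (u n).1 ∈ I) →
      (∀ ε : ℝ, 0 < ε → ∃ N, ∀ m ≥ N, ∀ n ≥ N, nullDist I f (u m) (u n) < ε) →
      ∃ p : ℝ × X, p.1 ∈ I ∧
        ∀ ε : ℝ, 0 < ε → ∃ N, ∀ n ≥ N, nullDist I f (u n) p < ε) := by
  obtain ⟨a, ha, b, hb, hab⟩ := hInd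
  have hfmax : 0 < fmax := hmin.trans_le ((hbd a ha).1.trans (hbd a ha).2)
  have hf : ∀ t ∈ I, 0 < f t ∧ f t ≤ fmax := fun t ht =>
    ⟨hmin.trans_le (hbd t ht).1, (hbd t ht).2⟩
  have hne : ∀ p q : ℝ × X, p.1 ∈ I → q.1 ∈ I → ∃ c, WPChainLength I f p q c :=
    fun p q hp hq => (exists_wpChainLength_le hX hIc ha hb hab hfmax hf hp hq one_pos).imp
      fun _ h => h.1
  have hequiv : ∀ p q : ℝ × X, p.1 ∈ I → q.1 ∈ I →
      min 1 fmin * dist p q ≤ nullDist I f p q ∧ nullDist I f p q ≤ (1 + fmax) * dist p q :=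
    fun p q hp hq => ⟨min_mul_dist_le_nullDist hIc hmin (fun t ht => (hbd t ht).1) (hne p q hp hq),
      nullDist_le_mul_dist hX hIc ha hb hab hfmax hf hp hq⟩
  refine ⟨fun p q _ _ => nullDist_nonneg p q, fun p q hp hq => ⟨fun h => ?_, ?_⟩,
    fun p q _ _ => nullDist_comm p q,
    fun p q r hp hq hr => nullDist_triangle (hne p q hp hq) (hne q r hq hr),
    exists_forall_lt_of_mul_dist_le (hIclosed.preimage continuous_fst) (by positivity)
      fun p hp q hq => hequiv p q hp hq⟩
  · have := (hequiv p q hp hq).1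
    rw [h] at this
    exact dist_le_zero.1 (nonpos_of_mul_nonpos_right this (by positivity))
  · rintro rfl
    exact nullDist_self hp

/-- for a complete length space `X`, a closed nondegenerate interval `I` and a
measurable warping function `f` with `0 < fmin ≤ f ≤ fmax` on `I`, the null distance of the
warped product `I ×_f X` is a metric on `I × X` and `(I × X, d̂_f)` is complete. -/
theorem stmt2 {X : Type*} [MetricSpace X] [CompleteSpace X]
    (hX : ∀ x y : X, ∀ ε : ℝ, 0 < ε →
      ∃ z : X, max (dist x z) (dist z y) ≤ dist x y / 2 + ε)
    (I : Set ℝ) (hIclosed : IsClosed I) (hIc : I.OrdConnected)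
    (hInd : ∃ a ∈ I, ∃ b ∈ I, a < b)
    (f : ℝ → ℝ) (hf : Measurable f)
    (fmin fmax : ℝ) (hmin : 0 < fmin)
    (hbd : ∀ t ∈ I, fmin ≤ f t ∧ f t ≤ fmax) :
    (∀ p q : ℝ × X, p.1 ∈ I → q.1 ∈ I → 0 ≤ nullDist I f p q) ∧
    (∀ p q : ℝ × X, p.1 ∈ I → q.1 ∈ I → (nullDist I f p q = 0 ↔ p = q)) ∧
    (∀ p q : ℝ × X, p.1 ∈ I → q.1 ∈ I → nullDist I f p q = nullDist I f q p) ∧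
    (∀ p q r : ℝ × X, p.1 ∈ I → q.1 ∈ I → r.1 ∈ I →
      nullDist I f p r ≤ nullDist I f p q + nullDist I f q r) ∧
    (∀ u : ℕ → ℝ × X, (∀ n, (u n).1 ∈ I) →
      (∀ ε : ℝ, 0 < ε → ∃ N, ∀ m ≥ N, ∀ n ≥ N, nullDist I f (u m) (u n) < ε) →
      ∃ p : ℝ × X, p.1 ∈ I ∧
        ∀ ε : ℝ, 0 < ε → ∃ N, ∀ n ≥ N, nullDist I f (u n) p < ε) :=
  stmt2_general hX I hIclosed hIc hInd f fmin fmax hmin hbd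
end

section
/- Let X be a length space and I ⊆ ℝ a nondegenerate interval. Then the null distance d̂_σ of the Lorentzian product I × X (warping function f ≡ 1) satisfies, for all (s,x), (t,y) ∈ I × X: d̂_σ((s,x),(t,y)) = max(|s − t|, d(x,y)). Equivalently, d̂_σ((s,x),(t,y)) = |s − t| when (s,x) and (t,y) are causally related (i.e. d(x,y) ≤ |s − t|), and d̂_σ((s,x),(t,y)) = d(x,y) otherwise. -/
open MeasureTheory

def HasApproxMidpoints (X : Type*) [MetricSpace X] : Prop :=
  ∀ x y : X, ∀ ε : ℝ, 0 < ε → ∃ z : X, max (dist x z) (dist z y) ≤ dist x y / 2 + ε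

def nullLength {α : Type*} (σ : ℕ → ℝ × α) (n : ℕ) : ℝ :=
  ∑ i ∈ Finset.range (n + 1), |(σ (i + 1)).1 - (σ i).1|

theorem abs_sub_le_nullLength {α : Type*} (σ : ℕ → ℝ × α) (n : ℕ) :
    |(σ (n + 1)).1 - (σ 0).1| ≤ nullLength σ n := by
  rw [nullLength, ← Finset.sum_range_sub (fun i => (σ i).1)]
  exact Finset.abs_sum_le_sum_abs _ _

section

variable {X : Type*} [MetricSpace X]

theorem wpCausal_one_iff {p q : ℝ × X} :
    WPCausal (fun _ => (1 : ℝ)) p q ↔ p.1 ≤ q.1 ∧ dist p.2 q.2 ≤ q.1 - p.1 := by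
  simp only [WPCausal, inv_one, ENNReal.ofReal_one, setLIntegral_const, one_mul,
    Real.volume_Ioc]
  exact and_congr_right fun hpq => ENNReal.ofReal_le_ofReal_iff (sub_nonneg.2 hpq)

theorem wpCausal_one_or_iff {p q : ℝ × X} :
    (WPCausal (fun _ => (1 : ℝ)) p q ∨ WPCausal (fun _ => (1 : ℝ)) q p) ↔
      dist p.2 q.2 ≤ |q.1 - p.1| := by
  rw [wpCausal_one_iff, wpCausal_one_iff, dist_comm q.2]
  rcases le_total p.1 q.1 with hpq | hqp
  · rw [abs_of_nonneg (sub_nonneg.2 hpq)]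
    constructor
    · rintro (⟨-, hd⟩ | ⟨-, hd⟩) <;> linarith
    · exact fun hd => Or.inl ⟨hpq, hd⟩
  · rw [abs_of_nonpos (sub_nonpos.2 hqp), neg_sub]
    constructor
    · rintro (⟨-, hd⟩ | ⟨-, hd⟩) <;> linarith
    · exact fun hd => Or.inr ⟨hqp, hd⟩

theorem dist_le_nullLength {σ : ℕ → ℝ × X} {n : ℕ}
    (hσ : ∀ i ≤ n, WPCausal (fun _ => (1 : ℝ)) (σ i) (σ (i + 1)) ∨
      WPCausal (fun _ => (1 : ℝ)) (σ (i + 1)) (σ i)) :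
    dist (σ 0).2 (σ (n + 1)).2 ≤ nullLength σ n :=
  (dist_le_range_sum_dist (fun i => (σ i).2) (n + 1)).trans <| Finset.sum_le_sum fun i hi =>
    wpCausal_one_or_iff.1 (hσ i (Nat.lt_succ_iff.1 (Finset.mem_range.1 hi)))

theorem max_le_nullLength_of_wpChain {I : Set ℝ} {p q : ℝ × X} {n : ℕ} {σ : ℕ → ℝ × X}
    (h : WPChain I (fun _ => (1 : ℝ)) p q n σ) :
    max |p.1 - q.1| (dist p.2 q.2) ≤ nullLength σ n := by
  obtain ⟨rfl, rfl, -, hσ⟩ := h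
  exact max_le (abs_sub_comm (σ 0).1 _ ▸ abs_sub_le_nullLength σ n) (dist_le_nullLength hσ)

def JoinedBySteps (h : ℝ) (n : ℕ) (x y : X) : Prop :=
  ∃ z : ℕ → X, z 0 = x ∧ z n = y ∧ ∀ i < n, dist (z i) (z (i + 1)) ≤ h

namespace JoinedBySteps

variable {h h' : ℝ} {n m : ℕ} {x y w : X}

theorem of_dist_le (hxy : dist x y ≤ h) : JoinedBySteps h 1 x y :=
  ⟨fun i => if i = 0 then x else y, rfl, rfl, fun i hi => by
    obtain rfl : i = 0 := Nat.lt_one_iff.1 hi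
    simpa using hxy⟩

theorem mono (hxy : JoinedBySteps h n x y) (hh : h ≤ h') : JoinedBySteps h' n x y :=
  let ⟨z, hz0, hzn, hz⟩ := hxy
  ⟨z, hz0, hzn, fun i hi => (hz i hi).trans hh⟩

theorem trans (hxy : JoinedBySteps h n x y) (hyw : JoinedBySteps h m y w) :
    JoinedBySteps h (n + m) x w := by
  obtain ⟨z₁, rfl, rfl, hz₁⟩ := hxy
  obtain ⟨z₂, hz₂0, rfl, hz₂⟩ := hyw
  set z := fun i => if i ≤ n then z₁ i else z₂ (i - n)
  have hz_le : ∀ i ≤ n, z i = z₁ i := fun i hi => if_pos hi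
  have hz_ge : ∀ i, n ≤ i → z i = z₂ (i - n) := by
    intro i hi
    rcases hi.eq_or_lt with rfl | hlt
    · rw [hz_le n le_rfl, Nat.sub_self, hz₂0]
    · exact if_neg hlt.not_ge
  refine ⟨z, hz_le 0 (Nat.zero_le n), by rw [hz_ge _ (Nat.le_add_right n m),
    Nat.add_sub_cancel_left], fun i hi => ?_⟩
  rcases lt_or_ge i n with hin | hni
  · rw [hz_le i hin.le, hz_le (i + 1) hin]
    exact hz₁ i hin
  · rw [hz_ge i hni, hz_ge (i + 1) (by omega), Nat.sub_add_comm hni]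
    exact hz₂ (i - n) (by omega)

end JoinedBySteps

theorem joinedBySteps_two_pow (hX : HasApproxMidpoints X) (k : ℕ) :
    ∀ (x y : X) {η : ℝ}, 0 < η → JoinedBySteps ((dist x y + η) / 2 ^ k) (2 ^ k) x y := by
  induction k with
  | zero =>
    intro x y η hη
    exact .of_dist_le (by simp [hη.le])
  | succ k ih =>
    intro x y η hη
    obtain ⟨m, hm⟩ := hX x y (η / 4) (by positivity)
    have half : ∀ a b : X, dist a b ≤ dist x y / 2 + η / 4 →
        (dist a b + η / 4) / 2 ^ k ≤ (dist x y + η) / 2 ^ (k + 1) := by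
      intro a b hab
      rw [pow_succ', ← div_div]
      gcongr
      linarith
    have hxmy := ((ih x m (by positivity)).mono (half _ _ (le_of_max_le_left hm))).trans
      ((ih m y (by positivity)).mono (half _ _ (le_of_max_le_right hm)))
    rwa [← two_mul, ← pow_succ'] at hxmy

noncomputable def stepToward (c h a : ℝ) : ℝ := if a < c then a + h else a - h

section stepToward

variable {c h : ℝ}

theorem abs_stepToward_sub (hh : 0 ≤ h) (a : ℝ) : |stepToward c h a - a| = h := by
  unfold stepToward
  split_ifs <;> simp [abs_of_nonneg hh]

theorem mapsTo_stepToward {u v : ℝ} (hh : 0 ≤ h) (hu : u ≤ c - h) (hv : c + h ≤ v) :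
    Set.MapsTo (stepToward c h) (Set.Icc u v) (Set.Icc u v) := by
  intro a ⟨hua, hav⟩
  unfold stepToward
  split_ifs with hac <;> constructor <;> linarith

theorem abs_stepToward_sub_le (a : ℝ) : |stepToward c h a - c| ≤ max (|a - c| - h) h := by
  unfold stepToward
  split_ifs with hac
  · rcases le_total (a + h) c with hle | hle
    · refine le_max_of_le_left ?_
      rw [abs_of_nonpos (by linarith), abs_of_neg (by linarith)]
      linarith
    · exact le_max_of_le_right (by rw [abs_of_nonneg (by linarith)]; linarith)
  · rcases le_total c (a - h) with hle | hle
    · refine le_max_of_le_left ?_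
      rw [abs_of_nonneg (by linarith), abs_of_nonneg (by linarith)]
      linarith
    · exact le_max_of_le_right (by rw [abs_of_nonpos (by linarith)]; linarith)

theorem abs_iterate_stepToward_sub_le (hh : 0 ≤ h) (n : ℕ) (a : ℝ) :
    |(stepToward c h)^[n] a - c| ≤ max (|a - c| - n * h) h := by
  induction n with
  | zero => simp
  | succ n ih =>
    rw [Function.iterate_succ_apply']
    refine (abs_stepToward_sub_le _).trans (max_le ?_ (le_max_right _ _))
    rcases le_max_iff.1 ih with hfar | hnear
    · exact le_max_of_le_left (by push_cast; linarith)
    · exact le_max_of_le_right (by linarith)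

end stepToward

theorem exists_center_mem_Icc {t u v h : ℝ} (hh : 0 ≤ h) (ht : t ∈ Set.Icc u v)
    (huv : u + 2 * h ≤ v) :
    ∃ c, u ≤ c - h ∧ c + h ≤ v ∧ |t - c| ≤ h := by
  refine ⟨max (u + h) (min t (v - h)), ?_, ?_, abs_sub_le_iff.2 ⟨?_, ?_⟩⟩ <;>
    grind

theorem Set.OrdConnected.exists_Icc_subset {I : Set ℝ} (hI : I.OrdConnected)
    (hInd : ∃ a ∈ I, ∃ b ∈ I, a < b) {s t : ℝ} (hs : s ∈ I) (ht : t ∈ I) :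
    ∃ u v, u < v ∧ Set.Icc u v ⊆ I ∧ s ∈ Set.Icc u v ∧ t ∈ Set.Icc u v := by
  obtain ⟨a, ha, b, hb, hab⟩ := hInd
  refine ⟨min a (min s t), max b (max s t), by grind,
    hI.out (min_rec' _ ha (min_rec' _ hs ht)) (max_rec' _ hb (max_rec' _ hs ht)), ?_, ?_⟩ <;>
    constructor <;> grind

theorem exists_wpChain_one_nullLength_eq {I : Set ℝ} {u v c h s t : ℝ} {N : ℕ} {x y : X}
    (hh : 0 ≤ h) (hxy : JoinedBySteps h N x y) (huv : Set.Icc u v ⊆ I)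
    (hu : u ≤ c - h) (hv : c + h ≤ v) (hs : s ∈ Set.Icc u v) (ht : t ∈ I) :
    ∃ σ, WPChain I (fun _ => (1 : ℝ)) (s, x) (t, y) N σ ∧
      nullLength σ N = N * h + |t - (stepToward c h)^[N] s| := by
  obtain ⟨z, rfl, rfl, hz⟩ := hxy
  set a : ℕ → ℝ := fun i => if i ≤ N then (stepToward c h)^[i] s else t
  have ha_le : ∀ i ≤ N, a i = (stepToward c h)^[i] s := fun i hi => if_pos hi
  have ha_last : a (N + 1) = t := if_neg (by omega)
  have ha_step : ∀ i < N, |a (i + 1) - a i| = h := fun i hi => by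
    rw [ha_le i hi.le, ha_le (i + 1) hi, Function.iterate_succ_apply', abs_stepToward_sub hh]
  -- the last segment `(a N, y) → (t, y)` is purely temporal
  refine ⟨fun i => (a i, z (min i N)), ⟨by simp [ha_le], by simp [ha_last], fun i hi => ?_,
    fun i hi => wpCausal_one_or_iff.2 ?_⟩, ?_⟩
  · rcases hi.lt_or_eq with hi | rfl
    · show a i ∈ I
      rw [ha_le i (by omega)]
      exact huv ((mapsTo_stepToward hh hu hv).iterate i hs)
    · simpa [ha_last] using ht
  · rcases hi.lt_or_eq with hi | rfl
    · simpa [min_eq_left hi.le, min_eq_left (Nat.succ_le_of_lt hi), ha_step i hi] using hz i hi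
    · simp
  · rw [nullLength, Finset.sum_range_succ, Finset.sum_congr rfl fun i hi =>
      ha_step i (Finset.mem_range.1 hi), ha_last, ha_le N le_rfl]
    simp

theorem exists_wpChain_one_nullLength_lt_of_abs_sub_lt_dist (hX : HasApproxMidpoints X)
    {I : Set ℝ} (hI : I.OrdConnected) (hInd : ∃ a ∈ I, ∃ b ∈ I, a < b) {s t : ℝ} {x y : X}
    (hs : s ∈ I) (ht : t ∈ I) (hst : |s - t| < dist x y) {w : ℝ} (hw : dist x y < w) :
    ∃ n σ, WPChain I (fun _ => (1 : ℝ)) (s, x) (t, y) n σ ∧ nullLength σ n < w := by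
  obtain ⟨u, v, huv, hIcc, hsuv, htuv⟩ := hI.exists_Icc_subset hInd hs ht
  set d := dist x y
  obtain ⟨η, hη, hwη⟩ : ∃ η, 0 < η ∧ d + 2 * η = w := ⟨(w - d) / 2, by linarith, by ring⟩
  obtain ⟨k, hk⟩ := pow_unbounded_of_one_lt ((d + η) / min (η / 4) ((v - u) / 2)) one_lt_two
  set h := (d + η) / 2 ^ k
  have hh : 0 < h := by positivity
  have hh_small : h < min (η / 4) ((v - u) / 2) :=
    (div_lt_comm₀ (lt_min (by positivity) (by linarith)) (pow_pos two_pos k)).1 hk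
  obtain ⟨c, hcu, hcv, htc⟩ :=
    exists_center_mem_Icc hh.le htuv (by linarith [min_le_right (η / 4) ((v - u) / 2)])
  obtain ⟨σ, hσ, hlen⟩ := exists_wpChain_one_nullLength_eq hh.le
    (joinedBySteps_two_pow hX k x y hη) hIcc hcu hcv hsuv ht
  have hNh : ((2 ^ k : ℕ) : ℝ) * h = d + η := by
    push_cast
    exact mul_div_cancel₀ _ (by positivity)
  have hsc : |s - c| - (2 ^ k : ℕ) * h ≤ h := by
    linarith [abs_sub_le s t c]
  have hend : |t - (stepToward c h)^[2 ^ k] s| ≤ 2 * h := calc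
    _ ≤ |t - c| + |c - (stepToward c h)^[2 ^ k] s| := abs_sub_le _ _ _
    _ ≤ h + h := add_le_add htc <| abs_sub_comm c _ ▸
      (abs_iterate_stepToward_sub_le hh.le _ s).trans (max_le hsc le_rfl)
    _ = 2 * h := (two_mul h).symm
  refine ⟨_, σ, hσ, ?_⟩
  rw [hlen, hNh]
  linarith [min_le_left (η / 4) ((v - u) / 2)]

theorem exists_wpChain_one_nullLength_lt (hX : HasApproxMidpoints X) {I : Set ℝ}
    (hI : I.OrdConnected) (hInd : ∃ a ∈ I, ∃ b ∈ I, a < b) {s t : ℝ} {x y : X}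
    (hs : s ∈ I) (ht : t ∈ I) {w : ℝ} (hw : max |s - t| (dist x y) < w) :
    ∃ n σ, WPChain I (fun _ => (1 : ℝ)) (s, x) (t, y) n σ ∧ nullLength σ n < w := by
  rcases le_or_gt (dist x y) |s - t| with hcausal | hspace
  · refine ⟨0, fun i => if i = 0 then (s, x) else (t, y), ⟨rfl, rfl, fun i _ => ?_,
      fun i hi => ?_⟩, ?_⟩
    · dsimp only
      split_ifs <;> assumption
    · obtain rfl := Nat.le_zero.1 hi
      exact wpCausal_one_or_iff.2 (by simpa [abs_sub_comm] using hcausal)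
    · simpa [nullLength, abs_sub_comm] using (le_max_left _ _).trans_lt hw
  · exact exists_wpChain_one_nullLength_lt_of_abs_sub_lt_dist hX hI hInd hs ht hspace
      ((le_max_right _ _).trans_lt hw)

end

/-- for a length space `X` and a nondegenerate interval `I`, the null distance
of the Lorentzian product `I × X` (warping function `f ≡ 1`) is
`d̂_σ((s,x),(t,y)) = max (|s − t|) (d(x,y))`. -/
theorem stmt3 {X : Type*} [MetricSpace X]
    (hX : ∀ x y : X, ∀ ε : ℝ, 0 < ε →
      ∃ z : X, max (dist x z) (dist z y) ≤ dist x y / 2 + ε)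
    (I : Set ℝ) (hIc : I.OrdConnected) (hInd : ∃ a ∈ I, ∃ b ∈ I, a < b) :
    ∀ s t : ℝ, ∀ x y : X, s ∈ I → t ∈ I →
      nullDist I (fun _ => (1 : ℝ)) (s, x) (t, y) = max |s - t| (dist x y) := by
  intro s t x y hs ht
  have approx := fun {w} (hw : max |s - t| (dist x y) < w) =>
    exists_wpChain_one_nullLength_lt hX hIc hInd hs ht hw
  refine csInf_eq_of_forall_ge_of_forall_gt_exists_lt ?_ ?_ fun w hw => ?_
  · obtain ⟨n, σ, hσ, -⟩ := approx (lt_add_one _)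
    exact ⟨_, n, σ, hσ, rfl⟩
  · rintro r ⟨n, σ, hσ, rfl⟩
    exact max_le_nullLength_of_wpChain hσ
  · obtain ⟨n, σ, hσ, hlt⟩ := approx hw
    exact ⟨_, ⟨n, σ, hσ, rfl⟩, hlt⟩
end

section
/- Let X be a length space, I ⊆ ℝ a nondegenerate interval, and f : I → ℝ measurable with 0 < f_min ≤ f(t) ≤ f_max < ∞ for all t ∈ I. Then the null distance d̂_f of the warped product I ×_f X satisfies: (i) if p = (s,x) and q = (t,y) are causally related (p ≼_f q or q ≼_f p), then d̂_f(p,q) = |s − t|; (ii) if p and q are not causally related, then f_min · d(x,y) ≤ d̂_f(p,q) ≤ f_max · d(x,y). -/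
/-!
A causal step `(s, x) ≼_f (t, y)` costs `t - s ≥ fmin · d(x, y)`, because
`∫ₛᵗ f⁻¹ ≤ (t - s) / fmin`; summing along a chain gives both lower bounds, and the one-step
chain gives `d̂_f = |s - t|` in the causal case. Conversely `fmax · d(x, y) ≤ |t - s|` already
forces causality.

For the upper bound in the non-causal case, approximate midpoints give points
`x = z₀, …, z_{2ᵐ} = y` with consecutive distances about `d(x, y) / 2ᵐ`. Go causally from `(s, x)`
to `(t, z_k)` with `k` as large as `|t - s|` allows, then zigzag between the time levels `t` and
`t ± c` through `z_k, …, z_{2ᵐ}`, where `c ≈ fmax · d(x, y) / 2ᵐ` makes every step causal.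
The null length is at most `(2ᵐ + 2) c`, which tends to `fmax · d(x, y)`.
-/

open MeasureTheory

lemma exists_mem_abs_sub_eq_of_le_half {I : Set ℝ} (hI : I.OrdConnected) {a b t h : ℝ}
    (ha : a ∈ I) (hb : b ∈ I) (ht : t ∈ I) (h0 : 0 ≤ h) (hh : h ≤ (b - a) / 2) :
    ∃ t' ∈ I, |t' - t| = h := by
  rcases le_total t ((a + b) / 2) with hmid | hmid
  · exact ⟨t + h, hI.out ht hb ⟨by linarith, by linarith⟩, by simp [abs_of_nonneg h0]⟩
  · exact ⟨t - h, hI.out ha ht ⟨by linarith, by linarith⟩, by simp [abs_of_nonneg h0]⟩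

section IntegralBounds

variable {I : Set ℝ} {f : ℝ → ℝ} {a b : ℝ}

lemma lintegral_inv_le_ofReal_div (hI : I.OrdConnected) {fmin : ℝ} (hmin : 0 < fmin)
    (hlb : ∀ t ∈ I, fmin ≤ f t) (ha : a ∈ I) (hb : b ∈ I) :
    ∫⁻ u in Set.Ioc a b, ENNReal.ofReal (f u)⁻¹ ≤ ENNReal.ofReal ((b - a) / fmin) := by
  have hsub : Set.Ioc a b ⊆ I := Set.Ioc_subset_Icc_self.trans (hI.out ha hb)
  calc ∫⁻ u in Set.Ioc a b, ENNReal.ofReal (f u)⁻¹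
      ≤ ∫⁻ _ in Set.Ioc a b, ENNReal.ofReal fmin⁻¹ :=
        setLIntegral_mono measurable_const fun u hu =>
          ENNReal.ofReal_le_ofReal (inv_anti₀ hmin (hlb u (hsub hu)))
    _ = ENNReal.ofReal ((b - a) / fmin) := by
        rw [setLIntegral_const, Real.volume_Ioc, ← ENNReal.ofReal_mul (by positivity),
          div_eq_inv_mul]

lemma ofReal_div_le_lintegral_inv (hI : I.OrdConnected) (hf : Measurable f) {fmax : ℝ}
    (hpos : ∀ t ∈ I, 0 < f t) (hub : ∀ t ∈ I, f t ≤ fmax) (ha : a ∈ I) (hb : b ∈ I) :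
    ENNReal.ofReal ((b - a) / fmax) ≤ ∫⁻ u in Set.Ioc a b, ENNReal.ofReal (f u)⁻¹ := by
  have hsub : Set.Ioc a b ⊆ I := Set.Ioc_subset_Icc_self.trans (hI.out ha hb)
  have hmax : 0 < fmax := (hpos a ha).trans_le (hub a ha)
  calc ENNReal.ofReal ((b - a) / fmax)
      = ∫⁻ _ in Set.Ioc a b, ENNReal.ofReal fmax⁻¹ := by
        rw [setLIntegral_const, Real.volume_Ioc, ← ENNReal.ofReal_mul (by positivity),
          div_eq_inv_mul]
    _ ≤ ∫⁻ u in Set.Ioc a b, ENNReal.ofReal (f u)⁻¹ :=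
        setLIntegral_mono hf.inv.ennreal_ofReal fun u hu =>
          ENNReal.ofReal_le_ofReal (inv_anti₀ (hpos u (hsub hu)) (hub u (hsub hu)))

end IntegralBounds

section Causal

variable {X : Type*} [MetricSpace X] {I : Set ℝ} {f : ℝ → ℝ}

lemma WPCausal.mul_dist_le_sub (hI : I.OrdConnected) {fmin : ℝ} (hmin : 0 < fmin)
    (hlb : ∀ t ∈ I, fmin ≤ f t) {p q : ℝ × X} (hp : p.1 ∈ I) (hq : q.1 ∈ I)
    (h : WPCausal f p q) : fmin * dist p.2 q.2 ≤ q.1 - p.1 := by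
  have := h.2.trans (lintegral_inv_le_ofReal_div hI hmin hlb hp hq)
  rw [ENNReal.ofReal_le_ofReal_iff (div_nonneg (sub_nonneg.2 h.1) hmin.le),
    le_div_iff₀ hmin] at this
  linarith

lemma mul_dist_le_abs_sub_of_causal (hI : I.OrdConnected) {fmin : ℝ} (hmin : 0 < fmin)
    (hlb : ∀ t ∈ I, fmin ≤ f t) {p q : ℝ × X} (hp : p.1 ∈ I) (hq : q.1 ∈ I)
    (h : WPCausal f p q ∨ WPCausal f q p) : fmin * dist p.2 q.2 ≤ |q.1 - p.1| := by
  rcases h with h | h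
  · exact (h.mul_dist_le_sub hI hmin hlb hp hq).trans (le_abs_self _)
  · rw [dist_comm, abs_sub_comm]
    exact (h.mul_dist_le_sub hI hmin hlb hq hp).trans (le_abs_self _)

lemma wpCausal_of_mul_dist_le_s5 (hI : I.OrdConnected) (hf : Measurable f) {fmax : ℝ}
    (hpos : ∀ t ∈ I, 0 < f t) (hub : ∀ t ∈ I, f t ≤ fmax) {p q : ℝ × X} (hp : p.1 ∈ I)
    (hq : q.1 ∈ I) (hpq : p.1 ≤ q.1) (h : fmax * dist p.2 q.2 ≤ q.1 - p.1) :
    WPCausal f p q := by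
  have hmax : 0 < fmax := (hpos _ hp).trans_le (hub _ hp)
  refine ⟨hpq, le_trans ?_ (ofReal_div_le_lintegral_inv hI hf hpos hub hp hq)⟩
  exact ENNReal.ofReal_le_ofReal ((le_div_iff₀ hmax).2 (by linarith))

lemma causal_of_mul_dist_le_abs_sub (hI : I.OrdConnected) (hf : Measurable f) {fmax : ℝ}
    (hpos : ∀ t ∈ I, 0 < f t) (hub : ∀ t ∈ I, f t ≤ fmax) {p q : ℝ × X} (hp : p.1 ∈ I)
    (hq : q.1 ∈ I) (h : fmax * dist p.2 q.2 ≤ |q.1 - p.1|) :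
    WPCausal f p q ∨ WPCausal f q p := by
  rcases le_total p.1 q.1 with hpq | hqp
  · rw [abs_of_nonneg (sub_nonneg.2 hpq)] at h
    exact Or.inl (wpCausal_of_mul_dist_le_s5 hI hf hpos hub hp hq hpq h)
  · rw [abs_of_nonpos (sub_nonpos.2 hqp), neg_sub, dist_comm] at h
    exact Or.inr (wpCausal_of_mul_dist_le_s5 hI hf hpos hub hq hp hqp h)

end Causal

section NullLengths

variable {X : Type*} [MetricSpace X] {I : Set ℝ} {f : ℝ → ℝ}

def nullLengths (I : Set ℝ) (f : ℝ → ℝ) (p q : ℝ × X) : Set ℝ :=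
  { r | ∃ n σ, WPChain I f p q n σ ∧
    r = ∑ i ∈ Finset.range (n + 1), |(σ (i + 1)).1 - (σ i).1| }

lemma bddBelow_nullLengths (p q : ℝ × X) : BddBelow (nullLengths I f p q) :=
  ⟨0, by
    rintro r ⟨n, σ, -, rfl⟩
    exact Finset.sum_nonneg fun i _ => abs_nonneg _⟩

lemma zero_mem_nullLengths {p : ℝ × X} (hp : p.1 ∈ I) : (0 : ℝ) ∈ nullLengths I f p p :=
  ⟨0, fun _ => p, ⟨rfl, rfl, fun _ _ => hp, fun _ _ => Or.inl ⟨le_rfl, by simp⟩⟩, by simp⟩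

lemma add_abs_sub_mem_nullLengths {p q q' : ℝ × X} {r : ℝ} (hr : r ∈ nullLengths I f p q)
    (hq' : q'.1 ∈ I) (hqq' : WPCausal f q q' ∨ WPCausal f q' q) :
    r + |q'.1 - q.1| ∈ nullLengths I f p q' := by
  obtain ⟨n, σ, ⟨h0, hlast, hI, hc⟩, rfl⟩ := hr
  have hσ : ∀ i ≤ n + 1, Function.update σ (n + 2) q' i = σ i := fun i hi =>
    Function.update_of_ne (by omega) _ _
  refine ⟨n + 1, Function.update σ (n + 2) q', ⟨?_, ?_, fun i hi => ?_, fun i hi => ?_⟩, ?_⟩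
  · rw [hσ 0 (by omega), h0]
  · exact Function.update_self _ _ _
  · rcases Nat.lt_or_eq_of_le hi with hi | rfl
    · rw [hσ i (by omega)]
      exact hI i (by omega)
    · rwa [Function.update_self]
  · rcases Nat.lt_or_eq_of_le hi with hi | rfl
    · rw [hσ i (by omega), hσ (i + 1) (by omega)]
      exact hc i (by omega)
    · rwa [hσ (n + 1) le_rfl, hlast, Function.update_self]
  · rw [Finset.sum_range_succ _ (n + 1), Function.update_self, hσ (n + 1) le_rfl, hlast]
    congr 1
    exact Finset.sum_congr rfl fun i hi => by
      rw [hσ i (by simp at hi; omega), hσ (i + 1) (by simp at hi; omega)]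

lemma abs_sub_mem_nullLengths_of_causal {p q : ℝ × X} (hp : p.1 ∈ I) (hq : q.1 ∈ I)
    (hpq : WPCausal f p q ∨ WPCausal f q p) : |q.1 - p.1| ∈ nullLengths I f p q := by
  simpa using add_abs_sub_mem_nullLengths (zero_mem_nullLengths hp) hq hpq

lemma abs_sub_le_of_mem_nullLengths {p q : ℝ × X} {r : ℝ} (hr : r ∈ nullLengths I f p q) :
    |q.1 - p.1| ≤ r := by
  obtain ⟨n, σ, ⟨rfl, rfl, -, -⟩, rfl⟩ := hr
  simpa only [Real.dist_eq, abs_sub_comm] using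
    dist_le_range_sum_dist (fun i => (σ i).1) (n + 1)

lemma mul_dist_le_of_mem_nullLengths (hI : I.OrdConnected) {fmin : ℝ} (hmin : 0 < fmin)
    (hlb : ∀ t ∈ I, fmin ≤ f t) {p q : ℝ × X} {r : ℝ} (hr : r ∈ nullLengths I f p q) :
    fmin * dist p.2 q.2 ≤ r := by
  obtain ⟨n, σ, ⟨rfl, rfl, hσI, hc⟩, rfl⟩ := hr
  calc fmin * dist (σ 0).2 (σ (n + 1)).2
      ≤ fmin * ∑ i ∈ Finset.range (n + 1), dist (σ i).2 (σ (i + 1)).2 :=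
        mul_le_mul_of_nonneg_left (dist_le_range_sum_dist (fun i => (σ i).2) _) hmin.le
    _ = ∑ i ∈ Finset.range (n + 1), fmin * dist (σ i).2 (σ (i + 1)).2 := Finset.mul_sum _ _ _
    _ ≤ ∑ i ∈ Finset.range (n + 1), |(σ (i + 1)).1 - (σ i).1| :=
        Finset.sum_le_sum fun i hi => by
          rw [Finset.mem_range] at hi
          exact mul_dist_le_abs_sub_of_causal hI hmin hlb (hσI i (by omega))
            (hσI (i + 1) (by omega)) (hc i (by omega))

end NullLengths

section Construction

variable {X : Type*} [MetricSpace X] {I : Set ℝ} {f : ℝ → ℝ} {fmax : ℝ}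

lemma exists_mem_nullLengths_zigzag (hI : I.OrdConnected) (hf : Measurable f)
    (hpos : ∀ t ∈ I, 0 < f t) (hub : ∀ t ∈ I, f t ≤ fmax) {p : ℝ × X} {a b r : ℝ}
    (ha : a ∈ I) (hb : b ∈ I) {w : ℕ → X} {n : ℕ}
    (hw : ∀ i < n, fmax * dist (w i) (w (i + 1)) ≤ |b - a|)
    (hr : r ∈ nullLengths I f p (a, w 0)) :
    ∃ r' ∈ nullLengths I f p (a, w n), r' ≤ r + (n + 1) * |b - a| := by
  have hstep : ∀ {c c' : ℝ} {v v' : X}, c ∈ I → c' ∈ I → fmax * dist v v' ≤ |c' - c| →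
      ∀ {r}, r ∈ nullLengths I f p (c, v) → r + |c' - c| ∈ nullLengths I f p (c', v') :=
    fun hc hc' h _ hr => add_abs_sub_mem_nullLengths hr hc'
      (causal_of_mul_dist_le_abs_sub (p := (_, _)) (q := (_, _)) hI hf hpos hub hc hc' h)
  have hzig : ∀ j ≤ n, ∃ c, (c = a ∨ c = b) ∧
      r + j * |b - a| ∈ nullLengths I f p (c, w j) := by
    intro j hj
    induction j with
    | zero => exact ⟨a, Or.inl rfl, by simpa using hr⟩
    | succ j ih =>
      obtain ⟨c, hc, hmem⟩ := ih (by omega)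
      obtain ⟨c', hc', hcc'⟩ : ∃ c', (c' = a ∨ c' = b) ∧ |c' - c| = |b - a| := by
        rcases hc with rfl | rfl
        exacts [⟨b, Or.inr rfl, rfl⟩, ⟨a, Or.inl rfl, abs_sub_comm _ _⟩]
      have hmemI : ∀ {d}, d = a ∨ d = b → d ∈ I := by rintro _ (rfl | rfl) <;> assumption
      refine ⟨c', hc', ?_⟩
      convert hstep (hmemI hc) (hmemI hc') (hcc' ▸ hw j (by omega)) hmem using 1
      rw [hcc']
      push_cast
      ring
  obtain ⟨c, hc, hmem⟩ := hzig n le_rfl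
  have hcI : c ∈ I := by rcases hc with rfl | rfl <;> assumption
  have hca : |a - c| ≤ |b - a| := by rcases hc with rfl | rfl <;> simp [abs_sub_comm]
  refine ⟨_, hstep hcI ha (by simp) hmem, ?_⟩
  linarith

lemma exists_mem_nullLengths_le_of_chain (hI : I.OrdConnected) (hf : Measurable f)
    (hpos : ∀ t ∈ I, 0 < f t) (hub : ∀ t ∈ I, f t ≤ fmax) {s t t' c : ℝ} {x y : X}
    (hs : s ∈ I) (ht : t ∈ I) (ht' : t' ∈ I) (htt' : |t' - t| = c) (hc : 0 < c)
    {z : ℕ → X} {N : ℕ} (hz0 : z 0 = x) (hzN : z N = y)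
    (hz : ∀ i < N, fmax * dist (z i) (z (i + 1)) ≤ c) (hst : |t - s| ≤ N * c) :
    ∃ r ∈ nullLengths I f (s, x) (t, y), r ≤ (N + 2) * c := by
  set k := ⌊|t - s| / c⌋₊
  have hkc : k * c ≤ |t - s| := (le_div_iff₀ hc).1 (Nat.floor_le (by positivity))
  have hkc' : |t - s| < (k + 1) * c := (div_lt_iff₀ hc).1 (Nat.lt_floor_add_one _)
  have hkN : k ≤ N := Nat.floor_le_of_le ((div_le_iff₀ hc).2 hst)
  have hxzk : fmax * dist x (z k) ≤ |t - s| := by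
    calc fmax * dist x (z k)
        ≤ ∑ i ∈ Finset.range k, fmax * dist (z i) (z (i + 1)) := by
          rw [← Finset.mul_sum, ← hz0]
          have hmax : 0 ≤ fmax := (hpos s hs).le.trans (hub s hs)
          exact mul_le_mul_of_nonneg_left (dist_le_range_sum_dist z k) hmax
      _ ≤ ∑ _i ∈ Finset.range k, c :=
          Finset.sum_le_sum fun i hi => hz i ((Finset.mem_range.1 hi).trans_le hkN)
      _ ≤ |t - s| := by simpa using hkc
  have hfirst : |t - s| ∈ nullLengths I f (s, x) (t, z k) :=
    abs_sub_mem_nullLengths_of_causal hs ht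
      (causal_of_mul_dist_le_abs_sub (p := (_, _)) (q := (_, _)) hI hf hpos hub hs ht hxzk)
  obtain ⟨r, hr, hrle⟩ := exists_mem_nullLengths_zigzag (w := fun i => z (k + i)) (n := N - k)
    hI hf hpos hub ht ht' (fun i hi => htt' ▸ hz (k + i) (by omega)) hfirst
  refine ⟨r, by rwa [Nat.add_sub_cancel' hkN, hzN] at hr, ?_⟩
  rw [htt', Nat.cast_sub hkN] at hrle
  nlinarith

end Construction

section LengthSpace

variable {X : Type*} [MetricSpace X]

lemma exists_refine_chain
    (hX : ∀ x y : X, ∀ ε : ℝ, 0 < ε → ∃ z : X, max (dist x z) (dist z y) ≤ dist x y / 2 + ε)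
    {z : ℕ → X} {n : ℕ} {B ε : ℝ} (hε : 0 < ε) (hz : ∀ i < n, dist (z i) (z (i + 1)) ≤ B) :
    ∃ z' : ℕ → X, z' 0 = z 0 ∧ z' (2 * n) = z n ∧
      ∀ i < 2 * n, dist (z' i) (z' (i + 1)) ≤ B / 2 + ε := by
  choose mid hmid using fun x y => hX x y ε hε
  have hmid_left : ∀ x y, dist x (mid x y) ≤ dist x y / 2 + ε := fun x y =>
    (le_max_left _ _).trans (hmid x y)
  have hmid_right : ∀ x y, dist (mid x y) y ≤ dist x y / 2 + ε := fun x y =>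
    (le_max_right _ _).trans (hmid x y)
  refine ⟨fun j => if j % 2 = 0 then z (j / 2) else mid (z (j / 2)) (z (j / 2 + 1)),
    by simp, by simp, fun j hj => ?_⟩
  obtain ⟨i, rfl | rfl⟩ := Nat.even_or_odd' j
  · have h1 : 2 * i % 2 = 0 := by omega
    have h2 : (2 * i + 1) % 2 ≠ 0 := by omega
    have h3 : (2 * i + 1) / 2 = i := by omega
    simp only [h1, h2, h3, if_true, if_false, Nat.mul_div_cancel_left i two_pos]
    linarith [hmid_left (z i) (z (i + 1)), hz i (by omega)]
  · have h1 : (2 * i + 1) % 2 ≠ 0 := by omega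
    have h2 : (2 * i + 1 + 1) % 2 = 0 := by omega
    have h3 : (2 * i + 1) / 2 = i := by omega
    have h4 : (2 * i + 1 + 1) / 2 = i + 1 := by omega
    simp only [h1, h2, h3, h4, if_true, if_false]
    linarith [hmid_right (z i) (z (i + 1)), hz i (by omega)]

lemma exists_dyadic_chain
    (hX : ∀ x y : X, ∀ ε : ℝ, 0 < ε → ∃ z : X, max (dist x z) (dist z y) ≤ dist x y / 2 + ε)
    (m : ℕ) (x y : X) {δ : ℝ} (hδ : 0 < δ) :
    ∃ z : ℕ → X, z 0 = x ∧ z (2 ^ m) = y ∧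
      ∀ i < 2 ^ m, dist (z i) (z (i + 1)) ≤ (dist x y + δ) / 2 ^ m := by
  induction m generalizing δ with
  | zero =>
    refine ⟨fun i => if i = 0 then x else y, by simp, by simp, fun i hi => ?_⟩
    obtain rfl : i = 0 := by omega
    simp [hδ.le]
  | succ m ih =>
    obtain ⟨z, hz0, hzm, hz⟩ := ih (half_pos hδ)
    obtain ⟨z', hz'0, hz'm, hz'⟩ :=
      exists_refine_chain hX (ε := δ / 2 ^ (m + 2)) (by positivity) hz
    refine ⟨z', hz'0.trans hz0, by rw [pow_succ', hz'm, hzm], fun i hi => ?_⟩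
    convert hz' i (by rwa [← pow_succ']) using 1
    rw [pow_succ, pow_succ]
    ring

end LengthSpace

open Filter Topology in
lemma exists_mem_nullLengths_le_mul_dist_add {X : Type*} [MetricSpace X]
    (hX : ∀ x y : X, ∀ ε : ℝ, 0 < ε → ∃ z : X, max (dist x z) (dist z y) ≤ dist x y / 2 + ε)
    {I : Set ℝ} (hI : I.OrdConnected) {f : ℝ → ℝ} (hf : Measurable f) {fmax : ℝ}
    (hpos : ∀ t ∈ I, 0 < f t) (hub : ∀ t ∈ I, f t ≤ fmax) {a b : ℝ} (ha : a ∈ I) (hb : b ∈ I)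
    (hab : a < b) {p q : ℝ × X} (hp : p.1 ∈ I) (hq : q.1 ∈ I)
    (hpq : |q.1 - p.1| ≤ fmax * dist p.2 q.2) {ε : ℝ} (hε : 0 < ε) :
    ∃ r ∈ nullLengths I f p q, r ≤ fmax * dist p.2 q.2 + ε := by
  obtain ⟨s, x⟩ := p
  obtain ⟨t, y⟩ := q
  set D := dist x y
  have hmax : 0 < fmax := (hpos s hp).trans_le (hub s hp)
  set u : ℕ → ℝ := fun m => ((2 : ℝ) ^ m)⁻¹
  set c : ℕ → ℝ := fun m => fmax * (D + u m) * u m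
  have hu : Tendsto u atTop (𝓝 0) :=
    tendsto_inv_atTop_zero.comp (tendsto_pow_atTop_atTop_of_one_lt one_lt_two)
  have hc : Tendsto c atTop (𝓝 0) := by
    simpa using ((hu.const_add D).const_mul fmax).mul hu
  have hcost : Tendsto (fun m => fmax * (D + u m) * (1 + 2 * u m)) atTop (𝓝 (fmax * D)) := by
    simpa using ((hu.const_add D).const_mul fmax).mul ((hu.const_mul 2).const_add 1)
  obtain ⟨m, hcm, hcostm⟩ := ((hc.eventually (gt_mem_nhds (half_pos (sub_pos.2 hab)))).and
    (hcost.eventually (gt_mem_nhds (lt_add_of_pos_right _ hε)))).exists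
  have hum : 0 < u m := by positivity
  have h2u : (2 : ℝ) ^ m * u m = 1 := mul_inv_cancel₀ (by positivity)
  have hcpos : 0 < c m := by positivity
  have hNc : (2 : ℝ) ^ m * c m = fmax * (D + u m) := by
    linear_combination (fmax * (D + u m)) * h2u
  obtain ⟨t', ht', htt'⟩ := exists_mem_abs_sub_eq_of_le_half hI ha hb hq hcpos.le hcm.le
  obtain ⟨z, hz0, hzN, hz⟩ := exists_dyadic_chain hX m x y hum
  obtain ⟨r, hr, hrle⟩ := exists_mem_nullLengths_le_of_chain (N := 2 ^ m) hI hf hpos hub hp hq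
    ht' htt' hcpos hz0 hzN
    (fun i hi => by
      rw [div_eq_mul_inv] at hz
      simpa only [c, mul_assoc] using mul_le_mul_of_nonneg_left (hz i hi) hmax.le)
    (by push_cast; rw [hNc]; nlinarith [mul_pos hmax hum])
  refine ⟨r, hr, hrle.trans (le_of_eq_of_le ?_ hcostm.le)⟩
  push_cast
  linear_combination hNc

/-- for a length space `X`, a nondegenerate interval `I` and a measurable
warping function with `0 < fmin ≤ f ≤ fmax` on `I`, the null distance of `I ×_f X`
satisfies: (i) `d̂_f(p,q) = |s − t|` if `p = (s,x)` and `q = (t,y)` are causally related;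
(ii) `fmin·d(x,y) ≤ d̂_f(p,q) ≤ fmax·d(x,y)` otherwise. -/
theorem stmt5 {X : Type*} [MetricSpace X]
    (hX : ∀ x y : X, ∀ ε : ℝ, 0 < ε →
      ∃ z : X, max (dist x z) (dist z y) ≤ dist x y / 2 + ε)
    (I : Set ℝ) (hIc : I.OrdConnected) (hInd : ∃ a ∈ I, ∃ b ∈ I, a < b)
    (f : ℝ → ℝ) (hf : Measurable f)
    (fmin fmax : ℝ) (hmin : 0 < fmin)
    (hbd : ∀ t ∈ I, fmin ≤ f t ∧ f t ≤ fmax) :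
    ∀ p q : ℝ × X, p.1 ∈ I → q.1 ∈ I →
      ((WPCausal f p q ∨ WPCausal f q p) → nullDist I f p q = |p.1 - q.1|) ∧
      (¬(WPCausal f p q ∨ WPCausal f q p) →
        fmin * dist p.2 q.2 ≤ nullDist I f p q ∧
        nullDist I f p q ≤ fmax * dist p.2 q.2) := by
  obtain ⟨a, ha, b, hb, hab⟩ := hInd
  have hlb : ∀ t ∈ I, fmin ≤ f t := fun t ht => (hbd t ht).1
  have hub : ∀ t ∈ I, f t ≤ fmax := fun t ht => (hbd t ht).2
  have hpos : ∀ t ∈ I, 0 < f t := fun t ht => hmin.trans_le (hlb t ht)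
  intro p q hp hq
  refine ⟨fun hpq => ?_, fun hpq => ?_⟩
  · have hmem := abs_sub_mem_nullLengths_of_causal hp hq hpq
    rw [abs_sub_comm]
    exact le_antisymm (csInf_le (bddBelow_nullLengths p q) hmem)
      (le_csInf ⟨_, hmem⟩ fun r => abs_sub_le_of_mem_nullLengths)
  · have hle_dist : |q.1 - p.1| ≤ fmax * dist p.2 q.2 :=
      le_of_not_ge fun h => hpq (causal_of_mul_dist_le_abs_sub hIc hf hpos hub hp hq h)
    have happrox := fun ε (hε : 0 < ε) =>
      exists_mem_nullLengths_le_mul_dist_add hX hIc hf hpos hub ha hb hab hp hq hle_dist hε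
    obtain ⟨r, hr, -⟩ := happrox 1 one_pos
    refine ⟨le_csInf ⟨r, hr⟩ fun r => mul_dist_le_of_mem_nullLengths hIc hmin hlb, ?_⟩
    refine le_of_forall_pos_le_add fun ε hε => ?_
    obtain ⟨r, hr, hle⟩ := happrox ε hε
    exact (csInf_le (bddBelow_nullLengths p q) hr).trans hle
end
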